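/- arXiv:2605.26410 — 5 statements merged into one kernel-verified Lean document; each statement's English description precedes it below -/
import Mathlib

section
/- Let σ ∈ {+1,−1} and let N₁,N₂,N₃,N₄ ∈ ℝ⁴ have Gram matrix G_{ij} = ⟪N_i,N_j⟫ with In(G) = In(η_σ). Fix i and let {j,k,l} = {1,2,3,4} \ {i}. If the 3×3 principal submatrix G_{\hat i} of G obtained by deleting the i-th row and column is nondegenerate, then N_j,N_k,N_l are linearly independent, and there exists V ∈ ℝ⁴ with ⟪V,V⟫ = σ and ⟪V,N_j⟫ = ⟪V,N_k⟫ = ⟪V,N_l⟫ = 0 if and only if In(G_{\hat i}) = (1,2). -/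
/-!
Let `n` be the three normals other than `N_i`, `Ĝ` their Gram matrix, and `V ≠ 0` a vector
orthogonal to them. Since `Ĝ` is nondegenerate, `V` is not in the span of `n`, so `M = (n, V)` is
a basis, and expanding `det (M η Mᵀ)` along the row of `V` gives
`⟪V,V⟫ · det Ĝ = det η · (det M)² = -σ (det M)²`.
Hence `V` can be rescaled to `⟪V,V⟫ = σ` iff `det Ĝ < 0`. A `3`-dimensional subspace of a space
with at most two negative directions is never negative definite, so `Ĝ` has at most two negative
eigenvalues, and `det Ĝ < 0` means exactly one.
-/
open Matrix

noncomputable section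

/-- Ambient metric: `η_{+1} = diag(-1,1,1,1)`, `η_{-1} = diag(-1,-1,1,1)`. -/
def eta (σ : ℝ) : Matrix (Fin 4) (Fin 4) ℝ := Matrix.diagonal ![-1, σ, 1, 1]

/-- Ambient bilinear form `⟪X,Y⟫ = Xᵀ η_σ Y`. -/
def ip (σ : ℝ) (X Y : Fin 4 → ℝ) : ℝ := X ⬝ᵥ (eta σ *ᵥ Y)

/-- Inertia `In(G) = (n₋(G), n₊(G))`: the numbers of negative and positive eigenvalues of a
real symmetric matrix, counted with multiplicity. -/
def inertia {n : ℕ} (G : Matrix (Fin n) (Fin n) ℝ) : ℕ × ℕ :=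
  if hG : G.IsHermitian then
    ((Finset.univ.filter fun i => hG.eigenvalues i < 0).card,
     (Finset.univ.filter fun i => 0 < hG.eigenvalues i).card)
  else (0, 0)

section Gram

variable {K ι κ : Type*} [Field K] [Fintype ι]

def gramMatrix (J : Matrix ι ι K) (v : κ → ι → K) : Matrix κ κ K :=
  of fun a b => v a ⬝ᵥ J *ᵥ v b

theorem gramMatrix_eq_mul (J : Matrix ι ι K) (v : κ → ι → K) :
    gramMatrix J v = of v * J * (of v)ᵀ := by
  ext a b
  rw [Matrix.mul_assoc]
  simp [gramMatrix, mul_apply, dotProduct, mulVec]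

theorem isHermitian_gramMatrix [StarRing K] [TrivialStar K] {J : Matrix ι ι K}
    (hJ : J.IsHermitian) (v : κ → ι → K) : (gramMatrix J v).IsHermitian := by
  rw [gramMatrix_eq_mul, ← conjTranspose_eq_transpose_of_trivial]
  exact isHermitian_mul_mul_conjTranspose _ hJ

theorem dotProduct_gramMatrix_mulVec [Fintype κ] (J : Matrix ι ι K) (v : κ → ι → K)
    (c : κ → K) : c ⬝ᵥ gramMatrix J v *ᵥ c = (c ᵥ* of v) ⬝ᵥ J *ᵥ (c ᵥ* of v) := by
  rw [gramMatrix_eq_mul, ← mulVec_mulVec, ← mulVec_mulVec, dotProduct_mulVec, mulVec_transpose]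

theorem det_gramMatrix [DecidableEq ι] (J : Matrix ι ι K) (v : ι → ι → K) :
    (gramMatrix J v).det = J.det * (of v).det ^ 2 := by
  rw [gramMatrix_eq_mul, det_mul, det_mul, det_transpose]
  ring

theorem det_gramMatrix_snoc {m : ℕ} (J : Matrix ι ι K) (n : Fin m → ι → K) (V : ι → K)
    (hV : ∀ a, V ⬝ᵥ J *ᵥ n a = 0) :
    (gramMatrix J (Fin.snoc n V : Fin (m + 1) → ι → K)).det
      = (V ⬝ᵥ J *ᵥ V) * (gramMatrix J n).det := by
  have hsub : (gramMatrix J (Fin.snoc n V : Fin (m + 1) → ι → K)).submatrix Fin.castSucc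
      Fin.castSucc = gramMatrix J n := by
    ext a b
    simp [gramMatrix]
  rw [det_succ_row _ (Fin.last m), Fin.sum_univ_castSucc, Fin.succAbove_last, hsub]
  simp [gramMatrix, hV]

theorem linearIndependent_of_det_gramMatrix_ne_zero [Fintype κ] [DecidableEq κ]
    (J : Matrix ι ι K) (v : κ → ι → K) (h : (gramMatrix J v).det ≠ 0) :
    LinearIndependent K v := by
  refine LinearIndependent.of_comp (vecMulLinear (J * (of v)ᵀ)) ?_
  have hrows : ⇑(vecMulLinear (J * (of v)ᵀ)) ∘ v = (gramMatrix J v).row := by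
    funext a
    rw [gramMatrix_eq_mul, Matrix.mul_assoc]
    rfl
  rw [hrows, linearIndependent_rows_iff_isUnit, isUnit_iff_isUnit_det]
  exact h.isUnit

theorem notMem_span_of_forall_dotProduct_mulVec_eq_zero [Fintype κ] [DecidableEq κ]
    (J : Matrix ι ι K) (n : κ → ι → K) (hG : (gramMatrix J n).det ≠ 0) {V : ι → K}
    (hV : ∀ a, V ⬝ᵥ J *ᵥ n a = 0) (hV0 : V ≠ 0) : V ∉ Submodule.span K (Set.range n) := by
  rw [Submodule.mem_span_range_iff_exists_fun]
  rintro ⟨c, hc⟩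
  have hcV : c ᵥ* of n = V := by rw [vecMul_eq_sum]; exact hc
  have hcG : c ᵥ* gramMatrix J n = 0 := by
    rw [gramMatrix_eq_mul, ← vecMul_vecMul, ← vecMul_vecMul, hcV]
    ext b
    rw [vecMul_transpose, mulVec, dotProduct_comm, ← dotProduct_mulVec]
    exact hV b
  rw [eq_zero_of_vecMul_eq_zero hG hcG] at hcV
  exact hV0 (by simpa using hcV.symm)

theorem exists_ne_zero_forall_dotProduct_eq_zero [Fintype κ] (w : κ → ι → K)
    (h : Fintype.card κ < Fintype.card ι) : ∃ v ≠ 0, ∀ a, v ⬝ᵥ w a = 0 := by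
  have hker := (mulVecLin (of w)).ker_ne_bot_of_finrank_lt (by simpa using h)
  obtain ⟨v, hv, hv0⟩ := Submodule.exists_mem_ne_zero_of_ne_bot hker
  refine ⟨v, hv0, fun a => ?_⟩
  rw [dotProduct_comm]
  exact congrFun hv a

variable {m : ℕ}

/-- The witness is `D = det (n, V)`. -/
theorem exists_det_ne_zero_dotProduct_self_mul_det_gramMatrix_eq
    (J : Matrix (Fin (m + 1)) (Fin (m + 1)) K) (n : Fin m → Fin (m + 1) → K)
    (hG : (gramMatrix J n).det ≠ 0) {V : Fin (m + 1) → K} (hV : ∀ a, V ⬝ᵥ J *ᵥ n a = 0)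
    (hV0 : V ≠ 0) : ∃ D ≠ 0, (V ⬝ᵥ J *ᵥ V) * (gramMatrix J n).det = J.det * D ^ 2 := by
  set M := of (Fin.snoc n V : Fin (m + 1) → Fin (m + 1) → K)
  have hM : M.det ≠ 0 := by
    rw [← isUnit_iff_ne_zero, ← isUnit_iff_isUnit_det, ← linearIndependent_rows_iff_isUnit]
    exact linearIndependent_finSnoc.mpr ⟨linearIndependent_of_det_gramMatrix_ne_zero J n hG,
      notMem_span_of_forall_dotProduct_mulVec_eq_zero J n hG hV hV0⟩
  exact ⟨M.det, hM, by rw [← det_gramMatrix_snoc J n V hV, det_gramMatrix]⟩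

end Gram

theorem exists_dotProduct_self_eq_and_orthogonal_iff {m : ℕ}
    (J : Matrix (Fin (m + 1)) (Fin (m + 1)) ℝ) (n : Fin m → Fin (m + 1) → ℝ)
    (hG : (gramMatrix J n).det ≠ 0) {σ : ℝ} (hσ : σ ≠ 0) :
    (∃ V, V ⬝ᵥ J *ᵥ V = σ ∧ ∀ a, V ⬝ᵥ J *ᵥ n a = 0) ↔ 0 < σ * J.det * (gramMatrix J n).det := by
  constructor
  · rintro ⟨V, hVV, hV⟩
    have hV0 : V ≠ 0 := by rintro rfl; simp [eq_comm, hσ] at hVV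
    obtain ⟨D, hD, key⟩ := exists_det_ne_zero_dotProduct_self_mul_det_gramMatrix_eq J n hG hV hV0
    rw [hVV] at key
    have hJ : J.det ≠ 0 := left_ne_zero_of_mul (key ▸ mul_ne_zero hσ hG)
    calc 0 < (J.det * D) ^ 2 := by positivity
      _ = σ * J.det * (gramMatrix J n).det := by linear_combination (-J.det) * key
  · intro h
    obtain ⟨V, hV0, hV⟩ := exists_ne_zero_forall_dotProduct_eq_zero (fun a => J *ᵥ n a) (by simp)
    obtain ⟨D, hD, key⟩ := exists_det_ne_zero_dotProduct_self_mul_det_gramMatrix_eq J n hG hV hV0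
    have hJ : J.det ≠ 0 := by rintro h0; simp [h0] at h
    set q := V ⬝ᵥ J *ᵥ V
    have hσq : 0 < σ * q := by
      refine (pos_iff_pos_of_mul_pos ?_).mpr h
      calc 0 < σ ^ 2 * (J.det * D) ^ 2 := by positivity
        _ = σ * q * (σ * J.det * (gramMatrix J n).det) := by
            linear_combination (-(σ ^ 2 * J.det)) * key
    have hq : q ≠ 0 := right_ne_zero_of_mul hσq.ne'
    refine ⟨Real.sqrt (σ / q) • V, ?_, fun a => by simp [smul_dotProduct, hV a]⟩
    simp only [mulVec_smul, dotProduct_smul, smul_dotProduct, smul_eq_mul]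
    rw [← mul_assoc, Real.mul_self_sqrt (div_pos_iff.mpr (mul_pos_iff.mp hσq)).le,
      div_mul_cancel₀ _ hq]

open scoped ComplexOrder in
theorem Matrix.IsHermitian.posDef_neg_iff_eigenvalues_neg {𝕜 n : Type*} [RCLike 𝕜] [Fintype n]
    [DecidableEq n] {A : Matrix n n 𝕜} (hA : A.IsHermitian) :
    (-A).PosDef ↔ ∀ i, hA.eigenvalues i < 0 := by
  conv_lhs => rw [hA.spectral_theorem, ← map_neg, Unitary.conjStarAlgAut_apply]
  simp [Unitary.isUnit_coe.posDef_star_right_conjugate_iff]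

theorem inertia_eq_one_two_iff {A : Matrix (Fin 3) (Fin 3) ℝ} (hA : A.IsHermitian)
    (hdet : A.det ≠ 0) (hneg : ¬ (-A).PosDef) : inertia A = (1, 2) ↔ A.det < 0 := by
  rw [hA.posDef_neg_iff_eigenvalues_neg, Fin.forall_fin_succ, Fin.forall_fin_two] at hneg
  rw [hA.det_eq_prod_eigenvalues, Fin.prod_univ_three] at hdet ⊢
  simp only [RCLike.ofReal_real_eq_id, id_eq, ne_eq, mul_eq_zero, not_or] at hdet ⊢
  obtain ⟨⟨h0, h1⟩, h2⟩ := hdet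
  rw [inertia, dif_pos hA, Finset.card_filter, Finset.card_filter, Fin.sum_univ_three,
    Fin.sum_univ_three]
  rcases lt_or_gt_of_ne h0 with h0 | h0 <;> rcases lt_or_gt_of_ne h1 with h1 | h1 <;>
    rcases lt_or_gt_of_ne h2 with h2 | h2 <;>
    simp_all [h0.asymm, h1.asymm, h2.asymm, mul_neg_iff, mul_pos_iff]

theorem dotProduct_eta_mulVec (σ : ℝ) (X Y : Fin 4 → ℝ) :
    X ⬝ᵥ eta σ *ᵥ Y = -(X 0 * Y 0) + σ * (X 1 * Y 1) + X 2 * Y 2 + X 3 * Y 3 := by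
  simp [eta, mulVec_diagonal, dotProduct, Fin.sum_univ_four]
  ring

theorem det_eta (σ : ℝ) : (eta σ).det = -σ := by
  simp [eta, det_diagonal, Fin.prod_univ_four]

theorem isHermitian_eta (σ : ℝ) : (eta σ).IsHermitian :=
  isHermitian_diagonal_of_self_adjoint _ (by ext i; fin_cases i <;> simp)

/-- Some nonzero combination of the three vectors has vanishing coordinates `0` and `1`, and `η_σ`
is positive semidefinite on such vectors. -/
theorem not_posDef_neg_gramMatrix_eta (σ : ℝ) (n : Fin 3 → Fin 4 → ℝ) :
    ¬ (-gramMatrix (eta σ) n).PosDef := by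
  intro h
  obtain ⟨c, hc0, hc⟩ :=
    exists_ne_zero_forall_dotProduct_eq_zero ![fun a => n a 0, fun a => n a 1] (by simp)
  have hpos := h.dotProduct_mulVec_pos hc0
  rw [star_trivial, neg_mulVec, dotProduct_neg, dotProduct_gramMatrix_mulVec,
    dotProduct_eta_mulVec] at hpos
  have h0 : (c ᵥ* of n) 0 = 0 := hc 0
  have h1 : (c ᵥ* of n) 1 = 0 := hc 1
  rw [h0, h1] at hpos
  nlinarith [mul_self_nonneg ((c ᵥ* of n) 2), mul_self_nonneg ((c ᵥ* of n) 3)]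

theorem vertex_reality_general (σ : ℝ) (hσ : σ = 1 ∨ σ = -1) (N : Fin 4 → (Fin 4 → ℝ))
    (G : Matrix (Fin 4) (Fin 4) ℝ) (hG : ∀ i j, G i j = ip σ (N i) (N j))
    (i : Fin 4) (hmin : (G.submatrix i.succAbove i.succAbove).det ≠ 0) :
    LinearIndependent ℝ (fun a : Fin 3 => N (i.succAbove a)) ∧
    ((∃ V : Fin 4 → ℝ, ip σ V V = σ ∧ ∀ a : Fin 3, ip σ V (N (i.succAbove a)) = 0) ↔
      inertia (G.submatrix i.succAbove i.succAbove) = (1, 2)) := by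
  have hsub : G.submatrix i.succAbove i.succAbove
      = gramMatrix (eta σ) (fun a => N (i.succAbove a)) := by
    ext a b
    exact hG _ _
  have hσ0 : σ ≠ 0 := by rcases hσ with rfl | rfl <;> norm_num
  rw [hsub] at hmin ⊢
  refine ⟨linearIndependent_of_det_gramMatrix_ne_zero _ _ hmin, ?_⟩
  rw [inertia_eq_one_two_iff (isHermitian_gramMatrix (isHermitian_eta σ) _) hmin
    (not_posDef_neg_gramMatrix_eta σ _)]
  refine (exists_dotProduct_self_eq_and_orthogonal_iff (eta σ) _ hmin hσ0).trans ?_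
  have hσσ : 0 < σ * σ := mul_self_pos.mpr hσ0
  rw [det_eta, mul_neg, neg_mul, neg_pos]
  exact ⟨fun h => neg_of_mul_neg_right h hσσ.le, mul_neg_of_pos_of_neg hσσ⟩

/-- Vertex reality: if the Gram matrix `G` of `N₁,…,N₄` has `In(G) = In(η_σ)` and the `3×3`
principal submatrix `G_{\hat i}` (deleting the `i`-th row and column, i.e. restricting to the
three indices `i.succAbove 0, i.succAbove 1, i.succAbove 2`) is nondegenerate, then the three
normals other than `N_i` are linearly independent, and there is a real vertex `V` with
`⟪V,V⟫ = σ` orthogonal to those three normals iff `In(G_{\hat i}) = (1,2)`. -/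
theorem vertex_reality (σ : ℝ) (hσ : σ = 1 ∨ σ = -1) (N : Fin 4 → (Fin 4 → ℝ))
    (G : Matrix (Fin 4) (Fin 4) ℝ) (hG : ∀ i j, G i j = ip σ (N i) (N j))
    (hIn : inertia G = inertia (eta σ)) (i : Fin 4)
    (hmin : (G.submatrix i.succAbove i.succAbove).det ≠ 0) :
    LinearIndependent ℝ (fun a : Fin 3 => N (i.succAbove a)) ∧
    ((∃ V : Fin 4 → ℝ, ip σ V V = σ ∧ ∀ a : Fin 3, ip σ V (N (i.succAbove a)) = 0) ↔
      inertia (G.submatrix i.succAbove i.succAbove) = (1, 2)) :=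
  vertex_reality_general σ hσ N G hG i hmin
end
end

section
/- Let n ∈ ℝ³ and Θ ∈ ℝ, and consider the matrix exponential exp(Θ·J(n)). (i) If ⟨n,n⟩ = −1, then exp(Θ J(n)) = I + sin Θ · J(n) + (1 − cos Θ) · J(n)². (ii) If ⟨n,n⟩ = +1, then exp(Θ J(n)) = I + sinh Θ · J(n) + (cosh Θ − 1) · J(n)². (iii) If ⟨n,n⟩ = 0, then J(n)³ = 0 and exp(J(n)) = I + J(n) + (1/2) J(n)². In all cases exp(Θ J(n)) n = n. -/
/-! Since `J(n)³ = ⟨n,n⟩ J(n)`, multiplication by `A = J(n)` preserves the span of `1, A, A²`: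
for `P = 1 + f A + g A²` the equation `P' = A P` reduces to `f' = 1 + ⟨n,n⟩ g`, `g' = f`,
`f(0) = g(0) = 0`, solved by `(sin, 1 - cos)`, `(sinh, cosh - 1)` and `(t, t²/2)` in the three
cases; uniqueness for `P' = A P`, `P 0 = 1` identifies `P` with `t ↦ exp (t A)`.
The axis is fixed because `J(n) n = n × n = 0` kills every term of the exponential series
except the first. -/

open Matrix

noncomputable section

/-- Tangent metric `η_T = diag(-1,1,1)` on `ℝ³`. -/
def etaT : Matrix (Fin 3) (Fin 3) ℝ := Matrix.diagonal ![-1, 1, 1]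

/-- Tangent bilinear form `⟨u,w⟩ = uᵀ η_T w`. -/
def ipT (u w : Fin 3 → ℝ) : ℝ := u ⬝ᵥ (etaT *ᵥ w)

/-- The map `J : ℝ³ → M₃(ℝ)` implementing the Lorentzian cross product, `J(u)w = u × w`. -/
def Jmat (u : Fin 3 → ℝ) : Matrix (Fin 3) (Fin 3) ℝ :=
  !![0, u 2, -u 1; u 2, 0, -u 0; -u 1, u 0, 0]

open NormedSpace

section ExpODE

variable {𝔸 : Type*} [NormedRing 𝔸] [NormedAlgebra ℝ 𝔸] [CompleteSpace 𝔸]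

theorem exp_neg_smul_mul_eq_one_of_hasDerivAt {A : 𝔸} {P : ℝ → 𝔸}
    (hP : ∀ t, HasDerivAt P (A * P t) t) (hP0 : P 0 = 1) (θ : ℝ) : exp (θ • -A) * P θ = 1 := by
  have hderiv : ∀ t, HasDerivAt (fun t : ℝ => exp (t • -A) * P t) 0 t := fun t => by
    refine ((hasDerivAt_exp_smul_const (-A) t).mul (hP t)).congr_deriv ?_
    rw [mul_assoc, ← mul_add, neg_mul, neg_add_cancel, mul_zero]
  simpa [hP0] using is_const_of_deriv_eq_zero (fun t => (hderiv t).differentiableAt)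
    (fun t => (hderiv t).deriv) θ 0

theorem eq_exp_smul_of_hasDerivAt {A : 𝔸} {P : ℝ → 𝔸} (hP : ∀ t, HasDerivAt P (A * P t) t)
    (hP0 : P 0 = 1) (θ : ℝ) : P θ = exp (θ • A) := by
  have hinv : exp (θ • A) * exp (θ • -A) = 1 := by
    simpa using exp_neg_smul_mul_eq_one_of_hasDerivAt (A := -A)
      (fun t => hasDerivAt_exp_smul_const' (-A) t) (by simp) θ
  rw [← one_mul (P θ), ← hinv, mul_assoc, exp_neg_smul_mul_eq_one_of_hasDerivAt hP hP0, mul_one]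

theorem exp_smul_eq_of_pow_three_eq_smul {A : 𝔸} {ε : ℝ} (hA : A ^ 3 = ε • A) {f g : ℝ → ℝ}
    (hf0 : f 0 = 0) (hg0 : g 0 = 0) (hf : ∀ t, HasDerivAt f (1 + ε * g t) t)
    (hg : ∀ t, HasDerivAt g (f t) t) (θ : ℝ) :
    exp (θ • A) = 1 + f θ • A + g θ • A ^ 2 := by
  refine (eq_exp_smul_of_hasDerivAt (P := fun t => 1 + f t • A + g t • A ^ 2) (fun t => ?_)
    (by simp [hf0, hg0]) θ).symm
  have hAP : A * (1 + f t • A + g t • A ^ 2) = (1 + ε * g t) • A + f t • A ^ 2 := by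
    rw [mul_add, mul_add, mul_one, mul_smul_comm, mul_smul_comm, ← sq, ← pow_succ', hA]
    module
  rw [hAP]
  exact (((hf t).smul_const A).const_add 1).add ((hg t).smul_const (A ^ 2))

end ExpODE

-- Any matrix norm will do: they all induce the product topology, which is all `exp` depends on.
attribute [local instance] Matrix.linftyOpNormedRing Matrix.linftyOpNormedAlgebra

theorem Matrix.exp_mulVec_of_mulVec_eq_zero {𝕂 m : Type*} [RCLike 𝕂] [Fintype m] [DecidableEq m]
    {A : Matrix m m 𝕂} {v : m → 𝕂} (hv : A *ᵥ v = 0) : exp A *ᵥ v = v := by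
  have hsum := (exp_series_hasSum_exp' (𝕂 := 𝕂) A).map (mulVec.addMonoidHomLeft v)
    (continuous_id.matrix_mulVec continuous_const)
  have hterms : ∀ k ≠ 0, ((k.factorial⁻¹ : 𝕂) • A ^ k) *ᵥ v = 0 := by
    intro k hk
    obtain ⟨k, rfl⟩ := Nat.exists_eq_succ_of_ne_zero hk
    rw [smul_mulVec, pow_succ, ← mulVec_mulVec, hv, mulVec_zero, smul_zero]
  exact (hsum.unique (hasSum_single 0 hterms)).trans (by simp)

theorem Jmat_pow_three (n : Fin 3 → ℝ) : Jmat n ^ 3 = ipT n n • Jmat n := by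
  ext i j
  fin_cases i <;> fin_cases j <;>
    simp [Jmat, ipT, etaT, pow_succ, Matrix.mul_apply, Fin.sum_univ_three,
      dotProduct, Matrix.mulVec, Matrix.diagonal] <;> ring

theorem Jmat_mulVec_self (n : Fin 3 → ℝ) : Jmat n *ᵥ n = 0 := by
  ext i
  fin_cases i <;> simp [Jmat, Matrix.mulVec, dotProduct, Fin.sum_univ_three] <;> ring

/-- Closed forms of the exponential `exp(Θ J(n))` in the elliptic (`⟨n,n⟩ = -1`), hyperbolic
(`⟨n,n⟩ = +1`) and parabolic (`⟨n,n⟩ = 0`) cases, and invariance of the axis `n` in all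
cases. -/
theorem exp_J_closed_form (n : Fin 3 → ℝ) (Θ : ℝ) :
    (ipT n n = -1 →
      NormedSpace.exp (Θ • Jmat n) =
        1 + Real.sin Θ • Jmat n + (1 - Real.cos Θ) • (Jmat n) ^ 2) ∧
    (ipT n n = 1 →
      NormedSpace.exp (Θ • Jmat n) =
        1 + Real.sinh Θ • Jmat n + (Real.cosh Θ - 1) • (Jmat n) ^ 2) ∧
    (ipT n n = 0 →
      (Jmat n) ^ 3 = 0 ∧
      NormedSpace.exp (Jmat n) = 1 + Jmat n + (1/2 : ℝ) • (Jmat n) ^ 2) ∧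
    (NormedSpace.exp (Θ • Jmat n)) *ᵥ n = n := by
  refine ⟨fun h => ?_, fun h => ?_, fun h => ?_, ?_⟩
  · refine exp_smul_eq_of_pow_three_eq_smul (h ▸ Jmat_pow_three n) (g := fun t => 1 - Real.cos t)
      Real.sin_zero (by simp) (fun t => ?_)
      (fun t => by simpa using (Real.hasDerivAt_cos t).const_sub 1) Θ
    convert Real.hasDerivAt_sin t using 1
    ring
  · refine exp_smul_eq_of_pow_three_eq_smul (h ▸ Jmat_pow_three n) (g := fun t => Real.cosh t - 1)
      Real.sinh_zero (by simp) (fun t => ?_)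
      (fun t => by simpa using (Real.hasDerivAt_cosh t).sub_const 1) Θ
    convert Real.hasDerivAt_sinh t using 1
    ring
  · have hcube : Jmat n ^ 3 = (0 : ℝ) • Jmat n := h ▸ Jmat_pow_three n
    refine ⟨by rw [hcube, zero_smul], ?_⟩
    have := exp_smul_eq_of_pow_three_eq_smul hcube (f := id) (g := fun t => t ^ 2 / 2)
      rfl (by simp) (fun t => by simpa using hasDerivAt_id t)
      (fun t => by simpa using (hasDerivAt_pow 2 t).div_const 2) 1
    norm_num at this
    exact this
  · exact exp_mulVec_of_mulVec_eq_zero (by rw [smul_mulVec, Jmat_mulVec_self, smul_zero])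
end
end

section
/- Let G be a real symmetric nondegenerate 4×4 matrix such that for every i ∈ {1,2,3,4} the 3×3 principal submatrix G_{\hat i} obtained by deleting the i-th row and column has inertia (1,2). Then In(G) ∈ {(1,3),(2,2)}; moreover det G < 0 if and only if In(G) = (1,3), and det G > 0 if and only if In(G) = (2,2). -/
/-!
Passing to a principal submatrix can only lower the positive and the negative index: a subspace
on which the form of `G.submatrix f f` is positive (negative) definite extends by zero to one for
`G`, and in eigen-coordinates `∑ λᵢ yᵢ²` such a subspace injects into the coordinates with
`λᵢ > 0` (`λᵢ < 0`). So `n₋(G) ≥ 1` and `n₊(G) ≥ 2`, nondegeneracy gives `n₋ + n₊ = 4`, and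
`det G = ∏ λᵢ` has the sign `(-1)^n₋`.
-/

open Matrix

noncomputable section

open Module Finset

section DiagonalForm

variable {ι ι' E F : Type*} [Fintype ι] [Fintype ι'] [AddCommGroup E] [Module ℝ E]
  [AddCommGroup F] [Module ℝ F]

theorem finrank_le_card_pos_of_forall_sum_mul_sq_pos (d : ι → ℝ) (e : E →ₗ[ℝ] ι → ℝ)
    (W : Submodule ℝ E) (hW : ∀ x ∈ W, x ≠ 0 → 0 < ∑ i, d i * e x i ^ 2) :
    finrank ℝ W ≤ #{i | 0 < d i} := by
  let T := LinearMap.funLeft ℝ ℝ (Subtype.val : {i // 0 < d i} → ι) ∘ₗ e ∘ₗ W.subtype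
  have hT : Function.Injective T := by
    rw [← LinearMap.ker_eq_bot, LinearMap.ker_eq_bot']
    intro x hx
    by_contra hx0
    refine (hW x x.2 (by simpa using hx0)).not_ge (Finset.sum_nonpos fun i _ => ?_)
    by_cases hi : 0 < d i
    · simp [show e x i = 0 from congrFun hx ⟨i, hi⟩]
    · exact mul_nonpos_of_nonpos_of_nonneg (not_lt.mp hi) (sq_nonneg _)
  simpa [Fintype.card_subtype] using LinearMap.finrank_le_finrank_of_injective hT

theorem exists_finrank_eq_card_pos_and_forall_sum_mul_sq_pos (d : ι → ℝ) (e : E ≃ₗ[ℝ] ι → ℝ) :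
    ∃ W : Submodule ℝ E, finrank ℝ W = #{i | 0 < d i} ∧
      ∀ x ∈ W, x ≠ 0 → 0 < ∑ i, d i * e x i ^ 2 := by
  let ext := Function.ExtendByZero.linearMap ℝ (Subtype.val : {i // 0 < d i} → ι)
  have hext : Function.Injective ext := Function.extend_injective Subtype.val_injective (0 : ι → ℝ)
  refine ⟨LinearMap.range (e.symm.toLinearMap ∘ₗ ext), ?_, ?_⟩
  · rw [LinearMap.finrank_range_of_inj (f := e.symm.toLinearMap ∘ₗ ext)
      (e.symm.injective.comp hext)]
    simp [Fintype.card_subtype]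
  · rintro _ ⟨c, rfl⟩ hc
    obtain ⟨i, hi⟩ : ∃ i, ext c i ≠ 0 := by
      by_contra! h
      exact hc (by simp [show ext c = 0 from funext h])
    have hsupp : ∀ i, ext c i ≠ 0 → 0 < d i := by
      intro i hi
      by_contra hd
      exact hi (Function.extend_apply' _ _ _ fun ⟨j, hj⟩ => hd (hj ▸ j.2))
    simp only [LinearMap.comp_apply, LinearEquiv.coe_coe, LinearEquiv.apply_symm_apply]
    refine Finset.sum_pos' (fun j _ => ?_) ⟨i, Finset.mem_univ _, ?_⟩
    · by_cases hj : ext c j = 0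
      · simp [hj]
      · exact mul_nonneg (hsupp j hj).le (sq_nonneg _)
    · exact mul_pos (hsupp i hi) (by positivity)

theorem card_pos_le_of_injective_of_sum_mul_sq_eq (d : ι → ℝ) (d' : ι' → ℝ) (e : E ≃ₗ[ℝ] ι → ℝ)
    (e' : F →ₗ[ℝ] ι' → ℝ) (φ : E →ₗ[ℝ] F) (hφ : Function.Injective φ)
    (h : ∀ x, ∑ i, d' i * e' (φ x) i ^ 2 = ∑ i, d i * e x i ^ 2) :
    #{i | 0 < d i} ≤ #{i | 0 < d' i} := by
  obtain ⟨W, hWrank, hW⟩ := exists_finrank_eq_card_pos_and_forall_sum_mul_sq_pos d e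
  calc #{i | 0 < d i} = finrank ℝ (W.map φ) := by
        rw [← hWrank, (Submodule.equivMapOfInjective φ hφ W).finrank_eq]
    _ ≤ #{i | 0 < d' i} := by
        refine finrank_le_card_pos_of_forall_sum_mul_sq_pos d' e' _ ?_
        rintro _ ⟨x, hx, rfl⟩ hφx
        rw [h]
        exact hW x hx (by rintro rfl; simp at hφx)

theorem card_neg_le_of_injective_of_sum_mul_sq_eq (d : ι → ℝ) (d' : ι' → ℝ) (e : E ≃ₗ[ℝ] ι → ℝ)
    (e' : F →ₗ[ℝ] ι' → ℝ) (φ : E →ₗ[ℝ] F) (hφ : Function.Injective φ)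
    (h : ∀ x, ∑ i, d' i * e' (φ x) i ^ 2 = ∑ i, d i * e x i ^ 2) :
    #{i | d i < 0} ≤ #{i | d' i < 0} := by
  simpa only [Pi.neg_apply, neg_pos] using
    card_pos_le_of_injective_of_sum_mul_sq_eq (-d) (-d') e e' φ hφ fun x => by
      simp only [Pi.neg_apply, neg_mul, Finset.sum_neg_distrib, h]

end DiagonalForm

theorem Function.Injective.extend_zero_dotProduct {R m n : Type*} [Fintype m] [Fintype n]
    [NonUnitalNonAssocSemiring R] {f : m → n} (hf : Function.Injective f) (y : m → R)
    (x : n → R) : Function.extend f y 0 ⬝ᵥ x = y ⬝ᵥ (x ∘ f) :=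
  (Fintype.sum_of_injective f hf _ _
    (fun k hk => by rw [Function.extend_apply' _ _ _ hk, Pi.zero_apply, zero_mul])
    (fun l => by rw [hf.extend_apply, Function.comp_apply])).symm

theorem Function.Injective.extend_zero_dotProduct_mulVec {R m n : Type*} [Fintype m] [Fintype n]
    [NonUnitalNonAssocCommSemiring R] {f : m → n} (hf : Function.Injective f) (G : Matrix n n R)
    (y : m → R) :
    Function.extend f y 0 ⬝ᵥ G *ᵥ Function.extend f y 0 = y ⬝ᵥ G.submatrix f f *ᵥ y := by
  rw [hf.extend_zero_dotProduct]
  congr 1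
  funext l
  simp only [Function.comp_apply, mulVec, dotProduct_comm (G (f l)), hf.extend_zero_dotProduct]
  exact dotProduct_comm _ _

theorem Finset.prod_eq_neg_one_pow_card_neg_mul_prod_abs {ι R : Type*} [CommRing R] [LinearOrder R]
    [IsStrictOrderedRing R] (s : Finset ι) (d : ι → R) :
    ∏ i ∈ s, d i = (-1) ^ #{i ∈ s | d i < 0} * ∏ i ∈ s, |d i| := by
  have hsign : ∀ i, d i = (if d i < 0 then -1 else 1) * |d i| := fun i => by
    split_ifs with h
    · rw [abs_of_neg h, neg_one_mul, neg_neg]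
    · rw [abs_of_nonneg (not_lt.mp h), one_mul]
  rw [Finset.prod_congr rfl fun i _ => hsign i, Finset.prod_mul_distrib, Finset.prod_ite,
    Finset.prod_const, Finset.prod_const_one, mul_one]

namespace Matrix.IsHermitian

variable {m n : Type*} [Fintype m] [Fintype n] [DecidableEq m] [DecidableEq n]
  {G : Matrix n n ℝ} (hG : G.IsHermitian) {f : m → n}

theorem dotProduct_mulVec_eq_sum_eigenvalues_mul_sq (x : n → ℝ) :
    x ⬝ᵥ G *ᵥ x = ∑ i, hG.eigenvalues i *
      (UnitaryGroup.toLinearEquiv (star hG.eigenvectorUnitary) x) i ^ 2 := by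
  set U : Matrix n n ℝ := (hG.eigenvectorUnitary : Matrix n n ℝ)
  set y := UnitaryGroup.toLinearEquiv (star hG.eigenvectorUnitary) x
  have hy : star U *ᵥ x = y := rfl
  have hUx : x ᵥ* U = y := by
    rwa [← mulVec_transpose, ← conjTranspose_eq_transpose_of_trivial, ← star_eq_conjTranspose]
  conv_lhs => rw [hG.spectral_theorem, Unitary.conjStarAlgAut_apply, ← mulVec_mulVec,
    ← mulVec_mulVec, dotProduct_mulVec, hUx, hy]
  simp only [dotProduct, mulVec_diagonal, Function.comp_apply, RCLike.ofReal_real_eq_id, id]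
  exact Finset.sum_congr rfl fun i _ => by ring

theorem sum_eigenvalues_mul_sq_extend_zero (hf : Function.Injective f) (y : m → ℝ) :
    ∑ i, hG.eigenvalues i * (UnitaryGroup.toLinearEquiv (star hG.eigenvectorUnitary)
        (Function.ExtendByZero.linearMap ℝ f y)) i ^ 2 =
      ∑ i, (hG.submatrix f).eigenvalues i *
        (UnitaryGroup.toLinearEquiv (star (hG.submatrix f).eigenvectorUnitary) y) i ^ 2 := by
  rw [← dotProduct_mulVec_eq_sum_eigenvalues_mul_sq, ← dotProduct_mulVec_eq_sum_eigenvalues_mul_sq]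
  exact hf.extend_zero_dotProduct_mulVec G y

theorem card_pos_eigenvalues_submatrix_le (hf : Function.Injective f) :
    #{i | 0 < (hG.submatrix f).eigenvalues i} ≤ #{i | 0 < hG.eigenvalues i} :=
  card_pos_le_of_injective_of_sum_mul_sq_eq _ _ _ _ _
    (Function.extend_injective hf (0 : n → ℝ)) (hG.sum_eigenvalues_mul_sq_extend_zero hf)

theorem card_neg_eigenvalues_submatrix_le (hf : Function.Injective f) :
    #{i | (hG.submatrix f).eigenvalues i < 0} ≤ #{i | hG.eigenvalues i < 0} :=
  card_neg_le_of_injective_of_sum_mul_sq_eq _ _ _ _ _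
    (Function.extend_injective hf (0 : n → ℝ)) (hG.sum_eigenvalues_mul_sq_extend_zero hf)

theorem det_eq_neg_one_pow_card_neg_mul_prod_abs :
    G.det = (-1) ^ #{i | hG.eigenvalues i < 0} * ∏ i, |hG.eigenvalues i| := by
  rw [hG.det_eq_prod_eigenvalues]
  simpa using Finset.prod_eq_neg_one_pow_card_neg_mul_prod_abs univ hG.eigenvalues

theorem eigenvalues_ne_zero_of_det_ne_zero (hdet : G.det ≠ 0) (i : n) : hG.eigenvalues i ≠ 0 :=
  fun hi => hdet <| by
    rw [hG.det_eq_prod_eigenvalues]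
    exact Finset.prod_eq_zero (mem_univ i) (by simp [hi])

theorem card_neg_eigenvalues_add_card_pos_eigenvalues (hdet : G.det ≠ 0) :
    #{i | hG.eigenvalues i < 0} + #{i | 0 < hG.eigenvalues i} = Fintype.card n := by
  rw [Finset.filter_congr fun i _ =>
      (hG.eigenvalues_ne_zero_of_det_ne_zero hdet i).symm.le_iff_lt.symm.trans not_lt.symm,
    Finset.card_filter_add_card_filter_not, card_univ]

theorem inertia_eq {k : ℕ} {G : Matrix (Fin k) (Fin k) ℝ} (hG : G.IsHermitian) :
    inertia G = (#{i | hG.eigenvalues i < 0}, #{i | 0 < hG.eigenvalues i}) :=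
  dif_pos hG

end Matrix.IsHermitian

/-- If `G` is a real symmetric nondegenerate `4×4` matrix all of whose `3×3` principal
submatrices (deleting the `i`-th row and column) have inertia `(1,2)`, then
`In(G) ∈ {(1,3),(2,2)}`, with `det G < 0` iff `In(G) = (1,3)` and `det G > 0` iff
`In(G) = (2,2)`. -/
theorem inertia_from_lorentzian_minors (G : Matrix (Fin 4) (Fin 4) ℝ)
    (hsymm : G.IsSymm) (hdet : G.det ≠ 0)
    (hmin : ∀ i : Fin 4, inertia (G.submatrix i.succAbove i.succAbove) = (1, 2)) :
    (inertia G = (1, 3) ∨ inertia G = (2, 2)) ∧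
    (G.det < 0 ↔ inertia G = (1, 3)) ∧
    (0 < G.det ↔ inertia G = (2, 2)) := by
  have hG : G.IsHermitian := isHermitian_iff_isSymm.mpr hsymm
  have hf : Function.Injective (0 : Fin 4).succAbove := Fin.succAbove_right_injective
  have hA := hmin 0
  rw [(hG.submatrix _).inertia_eq, Prod.mk.injEq] at hA
  have hneg := hA.1 ▸ hG.card_neg_eigenvalues_submatrix_le hf
  have hpos := hA.2 ▸ hG.card_pos_eigenvalues_submatrix_le hf
  have hcard : _ = 4 := hG.card_neg_eigenvalues_add_card_pos_eigenvalues hdet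
  have habs : 0 < ∏ i, |hG.eigenvalues i| :=
    Finset.prod_pos fun i _ => abs_pos.mpr (hG.eigenvalues_ne_zero_of_det_ne_zero hdet i)
  rw [hG.inertia_eq, hG.det_eq_neg_one_pow_card_neg_mul_prod_abs]
  set a := #{i | hG.eigenvalues i < 0}
  set b := #{i | 0 < hG.eigenvalues i}
  obtain ⟨ha, hb⟩ | ⟨ha, hb⟩ : a = 1 ∧ b = 3 ∨ a = 2 ∧ b = 2 := by omega
  all_goals simp [ha, hb, habs, habs.not_gt]
end
end

section
/- Let G be a real symmetric nondegenerate 4×4 matrix such that every 3×3 principal submatrix G_{\hat i} (obtained by deleting the i-th row and column) has inertia (1,2), and set σ := −sgn(det G) ∈ {+1,−1}. Then: (a) In(G) = In(η_σ); (b) there exist linearly independent N₁,N₂,N₃,N₄ ∈ ℝ⁴ with ⟪N_i,N_j⟫ = G_{ij}, and vectors V₁,V₂,V₃,V₄ ∈ ℝ⁴ with ⟪V_i,V_i⟫ = σ, ⟪V_i,N_j⟫ = 0 for all j ≠ i, and ⟪V_i,N_i⟫ < 0 for all i; (c) for any such data, {X ∈ ℝ⁴ : ⟪X,N_i⟫ ≤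 0 for all i} = {Σ_i λ_i V_i : λ_i ≥ 0}; (d) any two quadruples (N_i) and (N_i′) as in (b) are related by N_i′ = Λ N_i for a single Λ with Λᵀ η_σ Λ = η_σ. -/
open Matrix

noncomputable section

/-
The principal minor `G_{\hat 0}` is the restriction of the form of `G` to a coordinate hyperplane,
so its inertia `(1,2)` forces `G` to have at least one negative and two positive eigenvalues. Since
`G` is nondegenerate, `sgn det G = (-1)^{n₋(G)}` decides between `(1,3)` and `(2,2)`, which is
`In(η_σ)`. Sylvester's law then writes `G = B η_σ Bᵀ`, and the rows of `B` are the normals.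
The rows of `G⁻¹ B` form the dual basis; they can be rescaled to norm `σ` with negative support
numbers because `(G⁻¹)_{ii} = det G_{\hat i} / det G` has the sign of `σ`. Expanding in the dual
basis gives the cone, and two factorizations `G = B η Bᵀ = B' η B'ᵀ` differ by the `η`-isometry
`(B⁻¹ B')ᵀ`.
-/

open Finset

namespace Matrix.IsHermitian

variable {n : Type*} [Fintype n] [DecidableEq n] {A : Matrix n n ℝ} (hA : A.IsHermitian)

local notation "U" => (hA.eigenvectorUnitary : Matrix n n ℝ)

lemma transpose_eigenvectorUnitary_mul_self : Uᵀ * U = 1 := by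
  simpa [Matrix.star_eq_conjTranspose] using Unitary.coe_star_mul_self hA.eigenvectorUnitary

lemma eigenvectorUnitary_mul_diagonal_mul_transpose :
    U * diagonal hA.eigenvalues * Uᵀ = A := by
  conv_rhs => rw [hA.spectral_theorem, Unitary.conjStarAlgAut_apply]
  simp [Matrix.star_eq_conjTranspose]

lemma dotProduct_mulVec_self_eq_sum (x : n → ℝ) :
    x ⬝ᵥ A *ᵥ x = ∑ i, hA.eigenvalues i * (Uᵀ *ᵥ x) i ^ 2 := by
  conv_lhs => rw [← hA.eigenvectorUnitary_mul_diagonal_mul_transpose]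
  rw [← mulVec_mulVec, ← mulVec_mulVec, dotProduct_mulVec, ← mulVec_transpose, dotProduct]
  exact Finset.sum_congr rfl fun i _ => by rw [mulVec_diagonal]; ring

lemma finrank_le_card_filter_eigenvalues {E : Type*} [AddCommGroup E] [Module ℝ E]
    [FiniteDimensional ℝ E] (s : ℝ) (T : E →ₗ[ℝ] n → ℝ)
    (hT : ∀ x ≠ 0, 0 < s * (T x ⬝ᵥ A *ᵥ T x)) :
    Module.finrank ℝ E ≤ #{i | 0 < s * hA.eigenvalues i} := by
  set P := ({i | 0 < s * hA.eigenvalues i} : Finset n)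
  let coords : E →ₗ[ℝ] P → ℝ := LinearMap.funLeft ℝ ℝ Subtype.val ∘ₗ Uᵀ.mulVecLin ∘ₗ T
  by_contra! hlt
  obtain ⟨x, hx, hx0⟩ := Submodule.exists_mem_ne_zero_of_ne_bot
    (LinearMap.ker_ne_bot_of_finrank_lt (f := coords) (by simpa using hlt))
  have hvanish : ∀ i ∈ P, (Uᵀ *ᵥ T x) i = 0 := fun i hi => congrFun hx ⟨i, hi⟩
  have hle : s * (T x ⬝ᵥ A *ᵥ T x) ≤ 0 := by
    rw [hA.dotProduct_mulVec_self_eq_sum, Finset.mul_sum]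
    refine Finset.sum_nonpos fun i _ => ?_
    by_cases hi : i ∈ P
    · simp [hvanish i hi]
    · rw [← mul_assoc]
      exact mul_nonpos_of_nonpos_of_nonneg (by simpa [P] using hi) (sq_nonneg _)
  exact (hT x hx0).not_ge hle

lemma exists_definite_linearMap (s : ℝ) :
    ∃ T : ({i // 0 < s * hA.eigenvalues i} → ℝ) →ₗ[ℝ] n → ℝ,
      ∀ c ≠ 0, 0 < s * (T c ⬝ᵥ A *ᵥ T c) := by
  let extend : ({i // 0 < s * hA.eigenvalues i} → ℝ) →ₗ[ℝ] n → ℝ :=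
    LinearMap.pi fun i => if h : 0 < s * hA.eigenvalues i then LinearMap.proj ⟨i, h⟩ else 0
  refine ⟨mulVecLin U ∘ₗ extend, fun c hc => ?_⟩
  obtain ⟨⟨i, hi⟩, hci⟩ := Function.ne_iff.mp hc
  have hcoords : Uᵀ *ᵥ (U *ᵥ extend c) = extend c := by
    rw [mulVec_mulVec, hA.transpose_eigenvectorUnitary_mul_self, one_mulVec]
  simp only [LinearMap.comp_apply, mulVecLin_apply]
  rw [hA.dotProduct_mulVec_self_eq_sum, hcoords, Finset.mul_sum]
  refine Finset.sum_pos' (fun j _ => ?_) ⟨i, Finset.mem_univ _, ?_⟩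
  · rw [← mul_assoc]
    by_cases hj : 0 < s * hA.eigenvalues j
    · exact mul_nonneg hj.le (sq_nonneg _)
    · simp [extend, hj]
  · simp only [extend, LinearMap.pi_apply, dif_pos hi, LinearMap.coe_proj, Function.eval,
      ← mul_assoc]
    exact mul_pos hi (sq_pos_of_ne_zero (by simpa using hci))

lemma card_filter_eigenvalues_le_of_transpose_mul_mul_eq {m : Type*} [Fintype m]
    [DecidableEq m] {B : Matrix m m ℝ} (hB : B.IsHermitian) (P : Matrix n m ℝ)
    (hPB : Pᵀ * A * P = B) (s : ℝ) :
    #{j | 0 < s * hB.eigenvalues j} ≤ #{i | 0 < s * hA.eigenvalues i} := by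
  obtain ⟨T, hT⟩ := hB.exists_definite_linearMap s
  have hquad : ∀ y, P *ᵥ y ⬝ᵥ A *ᵥ P *ᵥ y = y ⬝ᵥ B *ᵥ y := fun y => by
    rw [← hPB, ← mulVec_mulVec, ← mulVec_mulVec, dotProduct_mulVec y, vecMul_transpose]
  simpa [Fintype.card_subtype] using
    hA.finrank_le_card_filter_eigenvalues s (P.mulVecLin ∘ₗ T) fun c hc => by
      simpa only [LinearMap.comp_apply, mulVecLin_apply, hquad] using hT c hc

end Matrix.IsHermitian

lemma Matrix.submatrix_eq_transpose_mul_mul {m n R : Type*} [Fintype n] [DecidableEq n]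
    [CommSemiring R] (A : Matrix n n R) (f : m → n) :
    A.submatrix f f =
      ((1 : Matrix n n R).submatrix id f)ᵀ * A * (1 : Matrix n n R).submatrix id f := by
  ext a b
  simp [mul_apply, one_apply]

lemma inv_apply_self_eq_det_submatrix_div {K : Type*} [Field K] {n : ℕ}
    (A : Matrix (Fin (n + 1)) (Fin (n + 1)) K) (i : Fin (n + 1)) :
    A⁻¹ i i = (A.submatrix i.succAbove i.succAbove).det / A.det := by
  rw [Matrix.inv_def, Matrix.smul_apply, adjugate_fin_succ_eq_det_submatrix,
    Even.neg_one_pow ⟨i, rfl⟩, one_mul, Ring.inverse_eq_inv', smul_eq_mul, div_eq_inv_mul]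

lemma Matrix.det_ne_zero_of_mul_mul_transpose_eq {n R : Type*} [Fintype n] [DecidableEq n]
    [CommRing R] {M η G : Matrix n n R} (h : M * η * Mᵀ = G) (hG : G.det ≠ 0) : M.det ≠ 0 := by
  rw [← h, Matrix.mul_assoc, det_mul] at hG
  exact left_ne_zero_of_mul hG

theorem exists_transpose_mul_mul_eq_self {n R : Type*} [Fintype n] [DecidableEq n] [CommRing R]
    {M M' η : Matrix n n R} (hM : IsUnit M.det) (h : M' * η * M'ᵀ = M * η * Mᵀ) :
    ∃ Λ : Matrix n n R, Λᵀ * η * Λ = η ∧ M' = M * Λᵀ := by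
  refine ⟨(M⁻¹ * M')ᵀ, ?_, ?_⟩
  · calc (M⁻¹ * M')ᵀᵀ * η * (M⁻¹ * M')ᵀ = M⁻¹ * (M' * η * M'ᵀ) * M⁻¹ᵀ := by
          simp only [transpose_transpose, transpose_mul, Matrix.mul_assoc]
      _ = (M⁻¹ * M) * η * (M⁻¹ * M)ᵀ := by
          rw [h, transpose_mul]; simp only [Matrix.mul_assoc]
      _ = η := by simp [nonsing_inv_mul M hM]
  · rw [transpose_transpose, ← Matrix.mul_assoc, mul_nonsing_inv M hM, Matrix.one_mul]

theorem setOf_forall_apply_nonpos_eq_cone {ι E : Type*} [Fintype ι] [AddCommGroup E]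
    [Module ℝ E] [FiniteDimensional ℝ E] (hcard : Fintype.card ι = Module.finrank ℝ E)
    (φ : ι → Module.Dual ℝ E) (V : ι → E) (hoff : ∀ i j, j ≠ i → φ j (V i) = 0)
    (hdiag : ∀ i, φ i (V i) < 0) :
    {X | ∀ i, φ i X ≤ 0} = {X | ∃ lam : ι → ℝ, (∀ i, 0 ≤ lam i) ∧ X = ∑ i, lam i • V i} := by
  classical
  have hcoord (lam : ι → ℝ) (i : ι) : φ i (∑ j, lam j • V j) = lam i * φ i (V i) := by
    rw [map_sum, Finset.sum_eq_single i (fun j _ hj => by simp [hoff j i hj.symm]) (by simp)]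
    simp
  have hli : LinearIndependent ℝ V := Fintype.linearIndependent_iff.mpr fun lam h i =>
    (mul_eq_zero.mp (by rw [← hcoord, h, map_zero])).resolve_right (hdiag i).ne
  have hspan := hli.span_eq_top_of_card_eq_finrank' hcard
  ext X
  refine ⟨fun hX => ?_, ?_⟩
  · obtain ⟨lam, rfl⟩ := (Submodule.mem_span_range_iff_exists_fun ℝ).mp
      (hspan ▸ Submodule.mem_top : X ∈ Submodule.span ℝ (Set.range V))
    refine ⟨lam, fun i => ?_, rfl⟩
    have := hX i
    rw [hcoord] at this
    exact nonneg_of_mul_nonpos_left this (hdiag i)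
  · rintro ⟨lam, hlam, rfl⟩ i
    rw [hcoord]
    exact mul_nonpos_of_nonneg_of_nonpos (hlam i) (hdiag i).le

section SignCounts

variable {n : Type*} [Fintype n]

lemma card_filter_neg_add_card_filter_pos_eq_card_iff (f : n → ℝ) :
    #{i | f i < 0} + #{i | 0 < f i} = Fintype.card n ↔ ∀ i, f i ≠ 0 := by
  classical
  rw [← card_union_of_disjoint (disjoint_filter.mpr fun i _ h h' => h.not_gt h'), ← filter_or,
    ← card_univ, card_filter_eq_iff]
  simp [lt_or_lt_iff_ne]

lemma neg_one_pow_card_filter_neg_mul_prod_pos (f : n → ℝ) (hf : ∀ i, f i ≠ 0) :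
    0 < (-1) ^ #{i | f i < 0} * ∏ i, f i := by
  rw [← prod_filter_mul_prod_filter_not univ (fun i => f i < 0), ← mul_assoc, ← prod_neg]
  refine mul_pos (prod_pos fun i hi => ?_) (prod_pos fun i hi => ?_)
  · simpa using hi
  · simp only [mem_filter, mem_univ, true_and, not_lt] at hi
    exact hi.lt_of_ne' (hf i)

end SignCounts

lemma Matrix.IsHermitian.card_filter_eigenvalues_diagonal {n : Type*} [Fintype n]
    [DecidableEq n] {d : n → ℝ} (hd : (diagonal d).IsHermitian) (p : ℝ → Prop) [DecidablePred p] :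
    #{i | p (hd.eigenvalues i)} = #{i | p (d i)} := by
  have hroots := hd.roots_charpoly_eq_eigenvalues
  rw [charpoly_diagonal, Polynomial.roots_prod _ _
    (by simp [prod_ne_zero_iff, Polynomial.X_sub_C_ne_zero])] at hroots
  simp only [Polynomial.roots_X_sub_C, Multiset.bind_singleton, RCLike.ofReal_real_eq_id,
    Function.comp_apply, id_eq] at hroots
  have hcount (g : n → ℝ) : #{i | p (g i)} = (univ.val.map g).countP p := by
    rw [Multiset.countP_map]; rfl
  rw [hcount, hcount, hroots]

section Inertia

variable {n : ℕ}

lemma Matrix.IsHermitian.inertia_eq_s15 {A : Matrix (Fin n) (Fin n) ℝ} (hA : A.IsHermitian) :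
    inertia A = (#{i | hA.eigenvalues i < 0}, #{i | 0 < hA.eigenvalues i}) :=
  dif_pos hA

lemma inertia_diagonal (d : Fin n → ℝ) :
    inertia (diagonal d) = (#{i | d i < 0}, #{i | 0 < d i}) := by
  have hd := isHermitian_diagonal d
  rw [hd.inertia_eq_s15, hd.card_filter_eigenvalues_diagonal (· < 0),
    hd.card_filter_eigenvalues_diagonal (0 < ·)]

lemma inertia_eta_one : inertia (eta 1) = (1, 3) := by
  rw [eta, inertia_diagonal]
  simp only [Finset.card_filter, Fin.sum_univ_four, Matrix.cons_val]
  norm_num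

lemma inertia_eta_neg_one : inertia (eta (-1)) = (2, 2) := by
  rw [eta, inertia_diagonal]
  simp only [Finset.card_filter, Fin.sum_univ_four, Matrix.cons_val]
  norm_num

lemma Matrix.IsHermitian.det_eq_prod_eigenvalues_real {A : Matrix (Fin n) (Fin n) ℝ}
    (hA : A.IsHermitian) : A.det = ∏ i, hA.eigenvalues i := by
  simpa using hA.det_eq_prod_eigenvalues

lemma inertia_fst_add_snd_of_det_ne_zero {A : Matrix (Fin n) (Fin n) ℝ} (hA : A.IsHermitian)
    (hdet : A.det ≠ 0) : (inertia A).1 + (inertia A).2 = n := by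
  rw [hA.det_eq_prod_eigenvalues_real, prod_ne_zero_iff] at hdet
  simpa [hA.inertia_eq_s15] using
    (card_filter_neg_add_card_filter_pos_eq_card_iff _).mpr fun i => hdet i (mem_univ i)

lemma neg_one_pow_inertia_fst_mul_det_pos {A : Matrix (Fin n) (Fin n) ℝ} (hA : A.IsHermitian)
    (h : (inertia A).1 + (inertia A).2 = n) : 0 < (-1) ^ (inertia A).1 * A.det := by
  rw [hA.inertia_eq_s15] at h ⊢
  rw [hA.det_eq_prod_eigenvalues_real]
  exact neg_one_pow_card_filter_neg_mul_prod_pos _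
    ((card_filter_neg_add_card_filter_pos_eq_card_iff hA.eigenvalues).mp (by simpa using h))

end Inertia

lemma exists_perm_lt_zero_iff {n : Type*} [Fintype n] [DecidableEq n] (f g : n → ℝ)
    (h : #{i | f i < 0} = #{i | g i < 0}) :
    ∃ π : Equiv.Perm n, ∀ i, f i < 0 ↔ g (π i) < 0 := by
  let e : {i // f i < 0} ≃ {i // g i < 0} :=
    Fintype.equivOfCardEq (by simpa [Fintype.card_subtype] using h)
  exact ⟨e.extendSubtype, fun i =>
    ⟨e.extendSubtype_mem i, fun hi => by_contra fun hn => e.extendSubtype_not_mem i hn hi⟩⟩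

-- The existence half of Sylvester's law of inertia.
theorem exists_mul_diagonal_mul_transpose_eq_of_inertia_eq {n : ℕ}
    {A : Matrix (Fin n) (Fin n) ℝ} (hA : A.IsHermitian) (hdet : A.det ≠ 0) (d : Fin n → ℝ)
    (h : inertia A = inertia (diagonal d)) : ∃ B, B * diagonal d * Bᵀ = A := by
  have hsum := inertia_fst_add_snd_of_det_ne_zero hA hdet
  rw [h, inertia_diagonal] at hsum
  rw [hA.inertia_eq_s15, inertia_diagonal, Prod.mk.injEq] at h
  have hev : ∀ i, hA.eigenvalues i ≠ 0 :=
    (card_filter_neg_add_card_filter_pos_eq_card_iff _).mp (by simpa [h.1, h.2] using hsum)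
  have hd : ∀ k, d k ≠ 0 :=
    (card_filter_neg_add_card_filter_pos_eq_card_iff d).mp (by simpa using hsum)
  obtain ⟨π, hπ⟩ := exists_perm_lt_zero_iff d hA.eigenvalues h.1.symm
  have hratio (k : Fin n) : 0 < hA.eigenvalues (π k) / d k := by
    rcases (hd k).lt_or_gt with hk | hk
    · exact div_pos_of_neg_of_neg ((hπ k).mp hk) hk
    · exact div_pos ((hev _).lt_or_gt.resolve_left fun h' => hk.not_gt ((hπ k).mpr h')) hk
  set U := (hA.eigenvectorUnitary : Matrix (Fin n) (Fin n) ℝ)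
  refine ⟨of fun i k => U i (π k) * √(hA.eigenvalues (π k) / d k), ?_⟩
  conv_rhs => rw [← hA.eigenvectorUnitary_mul_diagonal_mul_transpose]
  ext i j
  rw [mul_apply, mul_apply]
  simp only [mul_diagonal, transpose_apply, of_apply]
  refine Fintype.sum_equiv π _ _ fun k => ?_
  have hsq : √(hA.eigenvalues (π k) / d k) * √(hA.eigenvalues (π k) / d k) * d k =
      hA.eigenvalues (π k) := by
    rw [Real.mul_self_sqrt (hratio k).le, div_mul_cancel₀ _ (hd k)]
  linear_combination (U i (π k) * U j (π k)) * hsq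

lemma inertia_eq_inertia_eta_of_submatrix {G : Matrix (Fin 4) (Fin 4) ℝ} (hG : G.IsHermitian)
    (hdet : G.det ≠ 0)
    (hmin : inertia (G.submatrix (0 : Fin 4).succAbove (0 : Fin 4).succAbove) = (1, 2)) :
    inertia G = inertia (eta (-Real.sign G.det)) := by
  set M := G.submatrix (0 : Fin 4).succAbove (0 : Fin 4).succAbove
  have hM : M.IsHermitian := hG.submatrix _
  have hMG := (G.submatrix_eq_transpose_mul_mul (0 : Fin 4).succAbove).symm
  have hneg := hG.card_filter_eigenvalues_le_of_transpose_mul_mul_eq hM _ hMG (-1)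
  have hpos := hG.card_filter_eigenvalues_le_of_transpose_mul_mul_eq hM _ hMG 1
  simp only [neg_one_mul, neg_pos, one_mul] at hneg hpos
  rw [hM.inertia_eq_s15, Prod.mk.injEq] at hmin
  rw [hmin.1] at hneg
  rw [hmin.2] at hpos
  have hsum := inertia_fst_add_snd_of_det_ne_zero hG hdet
  have hsign := neg_one_pow_inertia_fst_mul_det_pos hG hsum
  rw [hG.inertia_eq_s15] at hsum hsign ⊢
  dsimp only at hsum hsign
  rcases hdet.lt_or_gt with hdet | hdet
  · rw [Real.sign_of_neg hdet, neg_neg, inertia_eta_one]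
    have hodd : #{i | hG.eigenvalues i < 0} ≠ 2 := fun h2 => by
      rw [h2, neg_one_sq, one_mul] at hsign; linarith
    exact Prod.ext (by simp only; omega) (by simp only; omega)
  · rw [Real.sign_of_pos hdet, inertia_eta_neg_one]
    have heven : #{i | hG.eigenvalues i < 0} ≠ 1 := fun h1 => by
      rw [h1, pow_one, neg_one_mul] at hsign; linarith
    exact Prod.ext (by simp only; omega) (by simp only; omega)

lemma ip_eq_mul_apply (σ : ℝ) (M K : Matrix (Fin 4) (Fin 4) ℝ) (i j : Fin 4) :
    ip σ (M i) (K j) = (M * eta σ * Kᵀ) i j := by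
  rw [Matrix.mul_assoc]; rfl

lemma ip_eq_toLinearMap₂'_flip (σ : ℝ) (X Y : Fin 4 → ℝ) :
    ip σ X Y = (toLinearMap₂' ℝ (eta σ)).flip Y X :=
  (toLinearMap₂'_apply' ..).symm

lemma forall_ip_eq_iff (σ : ℝ) (N : Fin 4 → Fin 4 → ℝ) (G : Matrix (Fin 4) (Fin 4) ℝ) :
    (∀ i j, ip σ (N i) (N j) = G i j) ↔ of N * eta σ * (of N)ᵀ = G := by
  rw [← Matrix.ext_iff]
  exact forall₂_congr fun i j => by rw [← ip_eq_mul_apply]; rfl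

lemma pos_mul_inv_apply_self {σ : ℝ} (hσ : σ * σ = 1) {G : Matrix (Fin 4) (Fin 4) ℝ}
    (hσdet : σ * G.det < 0) (i : Fin 4) (hminor : (G.submatrix i.succAbove i.succAbove).det < 0) :
    0 < σ * G⁻¹ i i := by
  have hdet : G.det ≠ 0 := right_ne_zero_of_mul hσdet.ne
  have hσ' : σ⁻¹ = σ := inv_eq_of_mul_eq_one_right hσ
  calc 0 < (G.submatrix i.succAbove i.succAbove).det / (σ * G.det) :=
        div_pos_of_neg_of_neg hminor hσdet
    _ = σ * G⁻¹ i i := by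
        rw [inv_apply_self_eq_det_submatrix_div, div_mul_eq_div_div_swap, div_eq_mul_inv _ σ, hσ']
        ring

lemma exists_vertices_of_mul_eta_mul_transpose_eq {σ : ℝ} (hσ : σ * σ = 1)
    {G B : Matrix (Fin 4) (Fin 4) ℝ} (hG : G.IsSymm) (hdet : G.det ≠ 0) (hB : B * eta σ * Bᵀ = G)
    (hpos : ∀ i, 0 < σ * G⁻¹ i i) :
    ∃ V : Fin 4 → Fin 4 → ℝ, (∀ i, ip σ (V i) (V i) = σ) ∧
      (∀ i j, j ≠ i → ip σ (V i) (B j) = 0) ∧ (∀ i, ip σ (V i) (B i) < 0) := by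
  have hinv : G⁻¹ * G = 1 := nonsing_inv_mul G hdet.isUnit
  have hinvT : (G⁻¹)ᵀ = G⁻¹ := by rw [transpose_nonsing_inv, hG.eq]
  set c : Fin 4 → ℝ := fun i => -(√(σ * G⁻¹ i i))⁻¹
  have hVB : diagonal c * G⁻¹ * B * eta σ * Bᵀ = diagonal c := by
    simp only [Matrix.mul_assoc] at hB ⊢
    rw [hB, hinv, Matrix.mul_one]
  have hVV : diagonal c * G⁻¹ * B * eta σ * (diagonal c * G⁻¹ * B)ᵀ =
      diagonal c * G⁻¹ * diagonal c := by
    rw [transpose_mul, transpose_mul, diagonal_transpose, hinvT, ← Matrix.mul_assoc,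
      ← Matrix.mul_assoc, hVB]
  refine ⟨diagonal c * G⁻¹ * B, fun i => ?_, fun i j hji => ?_, fun i => ?_⟩
  · rw [ip_eq_mul_apply, hVV, mul_diagonal, diagonal_mul]
    have hne : G⁻¹ i i ≠ 0 := fun h0 => by simpa [h0] using hpos i
    calc c i * G⁻¹ i i * c i = G⁻¹ i i / √(σ * G⁻¹ i i) ^ 2 := by ring
      _ = σ := by
        rw [Real.sq_sqrt (hpos i).le, div_eq_iff (mul_ne_zero (left_ne_zero_of_mul_eq_one hσ) hne)]
        linear_combination -(G⁻¹ i i) * hσ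
  · rw [ip_eq_mul_apply, hVB, diagonal_apply_ne _ hji.symm]
  · rw [ip_eq_mul_apply, hVB, diagonal_apply_eq]
    exact neg_neg_of_pos (inv_pos.mpr (Real.sqrt_pos.mpr (hpos i)))

/-- Reconstruction from a nondegenerate Gram matrix with Lorentzian vertex minors:
with `σ := -sgn(det G)`, (a) `In(G) = In(η_σ)`; (b) there exist linearly independent normals
`N_i` with Gram matrix `G`, together with vertices `V_i` of norm `σ` orthogonal to the other
three normals and with negative support numbers; (c) for all such data the half-space
intersection is the simplicial cone on the `V_i`; (d) any two such normal quadruples differ by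
a single `Λ` preserving `η_σ`. -/
theorem gram_reconstruction_theorem (G : Matrix (Fin 4) (Fin 4) ℝ)
    (hsymm : G.IsSymm) (hdet : G.det ≠ 0)
    (hmin : ∀ i : Fin 4, inertia (G.submatrix i.succAbove i.succAbove) = (1, 2)) :
    let σ : ℝ := -Real.sign G.det
    (inertia G = inertia (eta σ)) ∧
    (∃ N V : Fin 4 → (Fin 4 → ℝ), LinearIndependent ℝ N ∧
      (∀ i j, ip σ (N i) (N j) = G i j) ∧
      (∀ i, ip σ (V i) (V i) = σ) ∧
      (∀ i j, j ≠ i → ip σ (V i) (N j) = 0) ∧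
      (∀ i, ip σ (V i) (N i) < 0)) ∧
    (∀ N V : Fin 4 → (Fin 4 → ℝ), LinearIndependent ℝ N →
      (∀ i j, ip σ (N i) (N j) = G i j) →
      (∀ i, ip σ (V i) (V i) = σ) →
      (∀ i j, j ≠ i → ip σ (V i) (N j) = 0) →
      (∀ i, ip σ (V i) (N i) < 0) →
      {X : Fin 4 → ℝ | ∀ i, ip σ X (N i) ≤ 0} =
        {X : Fin 4 → ℝ | ∃ lam : Fin 4 → ℝ, (∀ i, 0 ≤ lam i) ∧ X = ∑ i, lam i • V i}) ∧
    (∀ N N' : Fin 4 → (Fin 4 → ℝ),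
      LinearIndependent ℝ N → (∀ i j, ip σ (N i) (N j) = G i j) →
      LinearIndependent ℝ N' → (∀ i j, ip σ (N' i) (N' j) = G i j) →
      ∃ Λ : Matrix (Fin 4) (Fin 4) ℝ, Λᵀ * eta σ * Λ = eta σ ∧ ∀ i, N' i = Λ *ᵥ N i) := by
  intro σ
  have hG : G.IsHermitian := isHermitian_iff_isSymm.mpr hsymm
  have hσ : σ * σ = 1 := by
    rcases Real.sign_apply_eq_of_ne_zero _ hdet with h | h <;> simp [σ, h]
  have hσdet : σ * G.det < 0 := by
    simpa [σ] using Real.sign_mul_pos_of_ne_zero _ hdet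
  have hinertia : inertia G = inertia (eta σ) :=
    inertia_eq_inertia_eta_of_submatrix hG hdet (hmin 0)
  refine ⟨hinertia, ?_, fun N V _ _ _ hVN hVNi => ?_, fun N N' _ hN _ hN' => ?_⟩
  · obtain ⟨B, hB⟩ := exists_mul_diagonal_mul_transpose_eq_of_inertia_eq hG hdet _ hinertia
    have hminor (i : Fin 4) : (G.submatrix i.succAbove i.succAbove).det < 0 := by
      simpa [hmin i] using neg_one_pow_inertia_fst_mul_det_pos (hG.submatrix i.succAbove)
        (by rw [hmin i]; rfl)
    obtain ⟨V, hVV, hVN, hVNi⟩ := exists_vertices_of_mul_eta_mul_transpose_eq hσ hsymm hdet hB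
      fun i => pos_mul_inv_apply_self hσ hσdet i (hminor i)
    refine ⟨fun i => B i, V, linearIndependent_rows_of_det_ne_zero ?_,
      (forall_ip_eq_iff σ _ G).mpr hB, hVV, hVN, hVNi⟩
    exact det_ne_zero_of_mul_mul_transpose_eq hB hdet
  · simp only [ip_eq_toLinearMap₂'_flip] at hVN hVNi ⊢
    exact setOf_forall_apply_nonpos_eq_cone (by simp) _ V hVN hVNi
  · rw [forall_ip_eq_iff] at hN hN'
    obtain ⟨Λ, hΛ, hN'Λ⟩ := exists_transpose_mul_mul_eq_self (M := of N) (M' := of N')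
      (det_ne_zero_of_mul_mul_transpose_eq hN hdet).isUnit
      (hN'.trans hN.symm)
    exact ⟨Λ, hΛ, fun i => by rw [← vecMul_transpose]; exact congrFun hN'Λ i⟩
end
end

section
/- Let n₁,n₂,n₃,n₄ ∈ ℝ³ and A₁,A₂,A₃,A₄ ∈ ℝ, and for i = 1,2,3,4 let O_i : (0,∞) → M₃(ℝ) be families of matrices such that R²·(O_i(R) − I) → A_i · J(n_i) as R → ∞. If O₄(R) O₃(R) O₂(R) O₁(R) = I for all R > 0, then A₁ n₁ + A₂ n₂ + A₃ n₃ + A₄ n₄ = 0. -/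
open Matrix Filter

noncomputable section

/-!
Write `O_i(R) = I + R⁻² M_i(R)` with `M_i(R) → A_i J(n_i)`. Each `O_i(R)` then tends to `I`, and
expanding the product gives `R²(O₄O₃O₂O₁ − I) → ∑ A_i J(n_i)`. The closure relation makes the
left side vanish, so `J(∑ A_i n_i) = ∑ A_i J(n_i) = 0`, and `J` is injective.
-/

section ScaledDeviation

variable {α : Type*} {l : Filter α} {s : α → ℝ}

theorem Filter.Tendsto.of_tendsto_smul_sub {E : Type*} [AddCommGroup E] [TopologicalSpace E]
    [IsTopologicalAddGroup E] [Module ℝ E] [ContinuousSMul ℝ E] {f : α → E} {c L : E}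
    (h : Tendsto (fun x => s x • (f x - c)) l (nhds L)) (hs : Tendsto s l atTop) :
    Tendsto f l (nhds c) := by
  have hlim : Tendsto (fun x => c + (s x)⁻¹ • (s x • (f x - c))) l (nhds (c + (0 : ℝ) • L)) :=
    tendsto_const_nhds.add ((tendsto_inv_atTop_zero.comp hs).smul h)
  rw [zero_smul, add_zero] at hlim
  refine hlim.congr' ?_
  filter_upwards [hs.eventually_ne_atTop 0] with x hx
  rw [inv_smul_smul₀ hx, add_sub_cancel]

theorem Filter.Tendsto.smul_mul_sub_one {M : Type*} [Ring M] [TopologicalSpace M]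
    [IsTopologicalRing M] [Module ℝ M] [IsScalarTower ℝ M M] {a b : α → M} {x y : M}
    (ha : Tendsto (fun r => s r • (a r - 1)) l (nhds x))
    (hb : Tendsto (fun r => s r • (b r - 1)) l (nhds y)) (hb₁ : Tendsto b l (nhds 1)) :
    Tendsto (fun r => s r • (a r * b r - 1)) l (nhds (x + y)) := by
  have hlim := (ha.mul hb₁).add hb
  rw [mul_one] at hlim
  refine hlim.congr fun r => ?_
  rw [smul_mul_assoc, ← smul_add]
  congr 1
  noncomm_ring

end ScaledDeviation

theorem Jmat_sum_smul {ι : Type*} (s : Finset ι) (A : ι → ℝ) (n : ι → Fin 3 → ℝ) :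
    Jmat (∑ i ∈ s, A i • n i) = ∑ i ∈ s, A i • Jmat (n i) := by
  ext j k
  fin_cases j <;> fin_cases k <;>
    simp [Jmat, Matrix.sum_apply, Finset.sum_apply, Finset.sum_neg_distrib]

theorem Jmat_eq_zero_iff {u : Fin 3 → ℝ} : Jmat u = 0 ↔ u = 0 := by
  refine ⟨fun h => ?_, fun h => by ext j k; fin_cases j <;> fin_cases k <;> simp [Jmat, h]⟩
  have h₀ := congrFun (congrFun h 2) 1
  have h₁ := congrFun (congrFun h 0) 2
  have h₂ := congrFun (congrFun h 0) 1
  simp [Jmat] at h₀ h₁ h₂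
  ext j
  fin_cases j <;> simpa

/-- Flat (curvature-zero) limit of the holonomy closure: if the four families of matrices
satisfy `R²(O_i(R) - I) → A_i J(n_i)` as `R → ∞` and close, `O₄O₃O₂O₁ = I`, for all `R > 0`,
then the flat Minkowski closure `∑ A_i n_i = 0` holds. -/
theorem flat_limit_minkowski_closure (n : Fin 4 → (Fin 3 → ℝ)) (A : Fin 4 → ℝ)
    (O : Fin 4 → ℝ → Matrix (Fin 3) (Fin 3) ℝ)
    (hlim : ∀ i, Tendsto (fun R : ℝ => (R ^ 2) • (O i R - 1)) atTop
      (nhds (A i • Jmat (n i))))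
    (hclos : ∀ R : ℝ, 0 < R → O 3 R * O 2 R * O 1 R * O 0 R = 1) :
    ∑ i, A i • n i = 0 := by
  have hsq : Tendsto (fun R : ℝ => R ^ 2) atTop atTop := tendsto_pow_atTop two_ne_zero
  have hO (i : Fin 4) : Tendsto (O i) atTop (nhds 1) := (hlim i).of_tendsto_smul_sub hsq
  have hprod := (((hlim 3).smul_mul_sub_one (hlim 2) (hO 2)).smul_mul_sub_one (hlim 1)
    (hO 1)).smul_mul_sub_one (hlim 0) (hO 0)
  have hzero : Tendsto (fun R : ℝ => R ^ 2 • (O 3 R * O 2 R * O 1 R * O 0 R - 1)) atTop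
      (nhds 0) := by
    refine tendsto_const_nhds.congr' ?_
    filter_upwards [eventually_gt_atTop 0] with R hR
    rw [hclos R hR, sub_self, smul_zero]
  rw [← Jmat_eq_zero_iff, Jmat_sum_smul, Fin.sum_univ_four, ← tendsto_nhds_unique hprod hzero]
  abel
end
end
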